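/- arXiv:2501.09037 — 7 statements merged into one kernel-verified Lean document; each statement's English description precedes it below -/
import Mathlib

section
/- For n = 3 and γ > 1, the inequality λ̂_3(γ) < λ̃_3(γ) holds if and only if 1 < γ < 3(13 + 4√10), where λ̂_3(γ) = 1 + 2(γ-1)/((γ+1)+√(8(γ-1))) and λ̃_3(γ) = 1 + (3/2)(1 - 1/γ). -/
/-!
Clearing denominators turns `λ̂₃ < λ̃₃` into `γ - 3 < 3 √(8(γ - 1))`. This always holds for
`γ ≤ 3`; for `γ > 3` squaring gives `γ² - 78γ + 81 < 0`, whose roots are `3(13 ∓ 4√10)`, and the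
smaller root lies below `3`.
-/

open Real

lemma two_mul_div_lt_three_halves_iff {γ s : ℝ} (hγ : 1 < γ) (hs : 0 ≤ s) :
    2 * (γ - 1) / (γ + 1 + s) < 3 / 2 * (1 - 1 / γ) ↔ γ - 3 < 3 * s := by
  have hrhs : 3 / 2 * (1 - 1 / γ) = 3 * (γ - 1) / (2 * γ) := by
    field_simp
  have hγ1 : 0 < γ - 1 := by linarith
  rw [hrhs, div_lt_div_iff₀ (by linarith) (by linarith),
    show 2 * (γ - 1) * (2 * γ) = (γ - 1) * (4 * γ) by ring,
    show 3 * (γ - 1) * (γ + 1 + s) = (γ - 1) * (3 * (γ + 1 + s)) by ring,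
    mul_lt_mul_iff_right₀ hγ1]
  constructor <;> intro h <;> linarith

lemma sq_sub_seventyEight_mul_add_eightyOne (γ : ℝ) :
    γ ^ 2 - 78 * γ + 81 = (γ - 3 * (13 - 4 * √10)) * (γ - 3 * (13 + 4 * √10)) := by
  have h10 : √10 ^ 2 = 10 := sq_sqrt (by norm_num)
  linear_combination 144 * h10

lemma three_lt_sqrt_ten : 3 < √10 := by
  rw [lt_sqrt (by norm_num)]
  norm_num

lemma sub_three_lt_three_mul_sqrt_iff {γ : ℝ} (hγ : 1 < γ) :
    γ - 3 < 3 * √(8 * (γ - 1)) ↔ γ < 3 * (13 + 4 * √10) := by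
  have h10 := three_lt_sqrt_ten
  rcases le_or_gt γ 3 with hle | hgt
  · have : 0 < √(8 * (γ - 1)) := sqrt_pos.mpr (by linarith)
    exact iff_of_true (by linarith) (by linarith)
  have hsqrt : 3 * √(8 * (γ - 1)) = √(72 * (γ - 1)) := by
    rw [show (72 : ℝ) * (γ - 1) = 3 ^ 2 * (8 * (γ - 1)) by ring,
      sqrt_mul (by norm_num : (0 : ℝ) ≤ 3 ^ 2), sqrt_sq (by norm_num)]
  have hsmall : 0 < γ - 3 * (13 - 4 * √10) := by linarith
  rw [hsqrt, lt_sqrt (by linarith), ← sub_neg,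
    show (γ - 3) ^ 2 - 72 * (γ - 1) = γ ^ 2 - 78 * γ + 81 by ring,
    sq_sub_seventyEight_mul_add_eightyOne]
  exact ⟨fun h ↦ sub_neg.mp (neg_of_mul_neg_right h hsmall.le),
    fun h ↦ mul_neg_of_pos_of_neg hsmall (sub_neg.mpr h)⟩

theorem stmt_7 (γ : ℝ) (hγ : 1 < γ) :
    (1 + 2 * (γ - 1) / ((γ + 1) + Real.sqrt (8 * (γ - 1)))
        < 1 + (3 / 2) * (1 - 1 / γ)) ↔
      γ < 3 * (13 + 4 * Real.sqrt 10) := by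
  rw [add_lt_add_iff_left, two_mul_div_lt_three_halves_iff hγ (sqrt_nonneg _)]
  exact sub_three_lt_three_mul_sqrt_iff hγ
end

section
/- For γ > 2 and 1 < λ < (γ√2)/(γ + √2 - 1), the inequality (γ² - 2γ - 1)(λ-1)² + 2(γ² - 1)(λ-1) - (γ-1)² < 0 holds. -/
/-! With `r = (γ - 1)(√2 - 1)/(γ + √2 - 1)`, the bound on `λ` says exactly `λ - 1 < r`, and `r` is a
root of the quadratic `f(t) = (γ² - 2γ - 1)t² + 2(γ² - 1)t - (γ - 1)²` (this uses `√2² = 2`).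
Factoring `f(t) = (t - r)((γ² - 2γ - 1)(t + r) + 2(γ² - 1))`, the second factor is positive for
`0 < t, r < 1`, since `γ² - 2γ - 1 > -1` and `γ² - 1 > 3` when `γ > 2`. -/

theorem quadratic_neg_of_lt_root {a b c r t : ℝ} (hr : a * r ^ 2 + b * r - c = 0) (ht : t < r)
    (hpos : 0 < a * (t + r) + b) : a * t ^ 2 + b * t - c < 0 := by
  have factor : a * t ^ 2 + b * t - c = (t - r) * (a * (t + r) + b) := by
    linear_combination hr
  rw [factor]
  exact mul_neg_of_neg_of_pos (by linarith) hpos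

theorem sqrt_two_root {γ r : ℝ} (hγ : γ + √2 - 1 ≠ 0)
    (hr : r = (γ - 1) * (√2 - 1) / (γ + √2 - 1)) :
    (γ ^ 2 - 2 * γ - 1) * r ^ 2 + 2 * (γ ^ 2 - 1) * r - (γ - 1) ^ 2 = 0 := by
  have hs : √2 ^ 2 = 2 := Real.sq_sqrt zero_le_two
  subst hr
  field_simp
  linear_combination γ ^ 2 * (γ - 1) ^ 2 * hs

theorem stmt_8 (γ lam : ℝ) (hγ : 2 < γ) (hl1 : 1 < lam)
    (hl2 : lam < (γ * Real.sqrt 2) / (γ + Real.sqrt 2 - 1)) :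
    (γ ^ 2 - 2 * γ - 1) * (lam - 1) ^ 2 + 2 * (γ ^ 2 - 1) * (lam - 1)
      - (γ - 1) ^ 2 < 0 := by
  have hs1 : 1 < √2 := by
    simpa using Real.sqrt_lt_sqrt zero_le_one one_lt_two
  have hs2 : √2 < 2 := by
    rw [Real.sqrt_lt' two_pos]
    norm_num
  have hden : 0 < γ + √2 - 1 := by linarith
  obtain ⟨r, hr⟩ : ∃ r, r = (γ - 1) * (√2 - 1) / (γ + √2 - 1) := ⟨_, rfl⟩
  have hlam : lam - 1 < r := by
    rw [lt_div_iff₀ hden] at hl2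
    rw [hr, lt_div_iff₀ hden]
    linarith
  have hr_lt_one : r < 1 := by
    rw [hr, div_lt_one hden]
    nlinarith
  refine quadratic_neg_of_lt_root (sqrt_two_root hden.ne' hr) hlam ?_
  have hA : 0 < γ ^ 2 - 2 * γ - 1 + 1 := by nlinarith
  nlinarith [mul_pos hA (show 0 < lam - 1 + r by linarith)]
end

section
/- For all γ > 5/3, one has (3γ-1)/(√3(γ-1)+2) < λ̂_3(γ) = 1 + 2(γ-1)/((γ+1)+√(8(γ-1))). -/
/-!
Write `s = √3` and `t = √(8(γ-1))`. The right-hand side is `(3γ-1+t)/(γ+1+t)`, and after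
cross-multiplying, the difference of the two sides factors as `(γ-1)(s-1)(3γ-1-st)` because
`s² = 3`. The last factor is positive since `(3γ-1)² - (st)² = (3γ-5)²`.
-/

lemma sqrt_three_mul_sqrt_lt {γ : ℝ} (hγ : 1 ≤ γ) (hγ' : γ ≠ 5 / 3) :
    √3 * √(8 * (γ - 1)) < 3 * γ - 1 := by
  rw [← Real.sqrt_mul (by norm_num), Real.sqrt_lt' (by linarith)]
  have hne : 3 * γ - 5 ≠ 0 := fun h ↦ hγ' (by linarith)
  nlinarith [sq_pos_of_ne_zero hne]

lemma one_add_two_mul_sub_one_div (γ t : ℝ) (h : γ + 1 + t ≠ 0) :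
    1 + 2 * (γ - 1) / (γ + 1 + t) = (3 * γ - 1 + t) / (γ + 1 + t) := by
  field_simp
  ring

lemma cross_mul_sub_eq {γ s : ℝ} (t : ℝ) (hs : s ^ 2 = 3) :
    (3 * γ - 1 + t) * (s * (γ - 1) + 2) - (3 * γ - 1) * (γ + 1 + t)
      = (γ - 1) * (s - 1) * (3 * γ - 1 - s * t) := by
  linear_combination (γ - 1) * t * hs

theorem stmt_11 (γ : ℝ) (hγ : 5 / 3 < γ) :
    (3 * γ - 1) / (Real.sqrt 3 * (γ - 1) + 2)
      < 1 + 2 * (γ - 1) / ((γ + 1) + Real.sqrt (8 * (γ - 1))) := by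
  have hγ1 : 1 < γ := by linarith
  have hγ1' : 0 < γ - 1 := sub_pos.2 hγ1
  have hs : 1 < √3 := by
    rw [Real.lt_sqrt zero_le_one]
    norm_num
  have hst := sqrt_three_mul_sqrt_lt hγ1.le hγ.ne'
  have hA : 0 < √3 * (γ - 1) + 2 := by positivity
  have hB : 0 < γ + 1 + √(8 * (γ - 1)) := by positivity
  rw [one_add_two_mul_sub_one_div γ _ hB.ne', div_lt_div_iff₀ hA hB, ← sub_pos,
    cross_mul_sub_eq _ (Real.sq_sqrt zero_le_three)]
  exact mul_pos (mul_pos hγ1' (sub_pos.2 hs)) (sub_pos.2 hst)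
end

section
/- Assume n ∈ {2,3}, γ > 1, m = n-1, ε = γ-1, μ = λ-1 with 1 < λ < λ̂_n(γ). Define 𝔞_n = ((ε-2)/(mε))μ - 1 and 𝔔_n = ((ε-2)/(mε))²μ² - 2((ε+2)/(mε))μ + 1, and V_- = (𝔞_n - √𝔔_n)/2. Then V_- > -1. -/
/-! The claim `V₋ > -1` is `√𝔔 < 𝔞 + 2`. Expanding gives the identity
`(𝔞 + 2)² - 𝔔 = 4μ / m > 0`, so it remains to see `𝔞 + 2 = ((ε - 2)μ + mε) / (mε) > 0`, i.e.
`(2 - ε)μ < mε`. This is where the upper bound on `λ` enters: it says `μ (ε + 2 + √(8ε)) < mε`,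
and `2 - ε < ε + 2 + √(8ε)`. -/

lemma neg_one_lt_half_sub_sqrt {a Q : ℝ} (ha : 0 < a + 2) (hQ : Q < (a + 2) ^ 2) :
    -1 < (a - √Q) / 2 := by
  have := (Real.sqrt_lt' ha).mpr hQ
  linarith

section

variable {m ε μ : ℝ}

lemma sq_add_two_sub_discr (hm : m ≠ 0) (hε : ε ≠ 0) :
    ((ε - 2) / (m * ε) * μ - 1 + 2) ^ 2
      - ((ε - 2) / (m * ε)) ^ 2 * μ ^ 2 + 2 * ((ε + 2) / (m * ε)) * μ - 1 = 4 * μ / m := by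
  field_simp
  ring

lemma add_two_pos_of_two_sub_mul_lt (hm : 0 < m) (hε : 0 < ε) (h : (2 - ε) * μ < m * ε) :
    0 < (ε - 2) / (m * ε) * μ - 1 + 2 := by
  have hmε : 0 < m * ε := mul_pos hm hε
  have : (ε - 2) / (m * ε) * μ - 1 + 2 = ((ε - 2) * μ + m * ε) / (m * ε) := by
    field_simp
    ring
  rw [this]
  exact div_pos (by linarith) hmε

lemma two_sub_mul_lt_of_lt_div (hε : 0 < ε) (hμ : 0 < μ)
    (h : μ < m * ε / (ε + 2 + √(8 * ε))) : (2 - ε) * μ < m * ε := by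
  have hs : 0 ≤ √(8 * ε) := Real.sqrt_nonneg _
  have hD : 0 < ε + 2 + √(8 * ε) := by linarith
  calc (2 - ε) * μ ≤ (ε + 2 + √(8 * ε)) * μ := by gcongr; linarith
    _ < m * ε := by rw [lt_div_iff₀ hD] at h; linarith

end

theorem stmt_13 (n γ lam : ℝ) (hn : n = 2 ∨ n = 3) (hγ : 1 < γ)
    (m ε μ : ℝ) (hm : m = n - 1) (hε : ε = γ - 1) (hμ : μ = lam - 1)
    (hl1 : 1 < lam)
    (hl2 : lam < 1 + (n - 1) * (γ - 1) / ((γ + 1) + Real.sqrt (8 * (γ - 1))))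
    (aN QN Vm : ℝ)
    (haN : aN = ((ε - 2) / (m * ε)) * μ - 1)
    (hQN : QN = ((ε - 2) / (m * ε)) ^ 2 * μ ^ 2 - 2 * ((ε + 2) / (m * ε)) * μ + 1)
    (hVm : Vm = (aN - Real.sqrt QN) / 2) :
    Vm > -1 := by
  have hm0 : 0 < m := by rcases hn with h | h <;> rw [hm, h] <;> norm_num
  have hε0 : 0 < ε := by linarith
  have hμ0 : 0 < μ := by linarith
  have hμ_lt : μ < m * ε / (ε + 2 + √(8 * ε)) := by
    rw [hμ, hm, hε]
    convert sub_lt_iff_lt_add'.mpr hl2 using 3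
    ring
  have hdiscr := sq_add_two_sub_discr (μ := μ) hm0.ne' hε0.ne'
  have hgap : 0 < 4 * μ / m := by positivity
  subst haN hQN hVm
  refine neg_one_lt_half_sub_sqrt
    (add_two_pos_of_two_sub_mul_lt hm0 hε0 (two_sub_mul_lt_of_lt_div hε0 hμ0 hμ_lt)) ?_
  linarith
end

section
/- Assume n ∈ {2,3}, γ > 1, m = n-1, ε = γ-1, μ = λ-1 with 1 < λ < λ̂_n(γ). With V_+ = (𝔞_n + √𝔔_n)/2 and V_* = -2μ/(nε), one has V_+ < V_* < 0. -/
set_option maxHeartbeats 1000000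


theorem stmt_14 (n γ lam : ℝ) (hn : n = 2 ∨ n = 3) (hγ : 1 < γ)
    (m ε μ : ℝ) (hm : m = n - 1) (hε : ε = γ - 1) (hμ : μ = lam - 1)
    (hl1 : 1 < lam)
    (hl2 : lam < 1 + (n - 1) * (γ - 1) / ((γ + 1) + Real.sqrt (8 * (γ - 1))))
    (aN QN Vp Vs : ℝ)
    (haN : aN = ((ε - 2) / (m * ε)) * μ - 1)
    (hQN : QN = ((ε - 2) / (m * ε)) ^ 2 * μ ^ 2 - 2 * ((ε + 2) / (m * ε)) * μ + 1)
    (hVp : Vp = (aN + Real.sqrt QN) / 2)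
    (hVs : Vs = -(2 * μ) / (n * ε)) :
    Vp < Vs ∧ Vs < 0 := by
  have hε' : 0 < ε := by rw [hε]; linarith
  have hε0 : ε ≠ 0 := ne_of_gt hε'
  have hμ' : 0 < μ := by rw [hμ]; linarith
  have hs : 0 ≤ Real.sqrt (8 * (γ - 1)) := Real.sqrt_nonneg _
  have hD : 0 < (γ + 1) + Real.sqrt (8 * (γ - 1)) := by linarith
  have h1 : μ < m * ε / ((γ + 1) + Real.sqrt (8 * (γ - 1))) := by
    rw [hμ, hm, hε]; linarith
  have h2 : μ * ((γ + 1) + Real.sqrt (8 * (γ - 1))) < m * ε :=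
    (lt_div_iff₀ hD).mp h1
  have key : μ * (ε + 2) < m * ε := by
    have : μ * (ε + 2) ≤ μ * ((γ + 1) + Real.sqrt (8 * (γ - 1))) := by
      nlinarith [hε]
    linarith
  rcases hn with h | h
  · -- n = 2, m = 1
    have hm1 : m = 1 := by rw [hm, h]; ring
    subst hm1
    have key2 : μ * ε + 2 * μ < ε := by
      have e : μ * (ε + 2) = μ * ε + 2 * μ := by ring
      linarith [key]
    have hVs0 : Vs < 0 := by
      rw [hVs, h]
      apply div_neg_of_neg_of_pos (by linarith) (by linarith)
    refine ⟨?_, hVs0⟩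
    have hB : 2 * Vs - aN = 1 - μ := by
      rw [hVs, haN, h]; field_simp; ring
    have hB' : (0:ℝ) < 1 - μ := by nlinarith
    have hq : Real.sqrt QN < 2 * Vs - aN := by
      rw [hB, Real.sqrt_lt' hB', hQN]
      have e1 : ((ε - 2) / (1 * ε)) ^ 2 * μ ^ 2 - 2 * ((ε + 2) / (1 * ε)) * μ + 1
          = ((ε - 2) ^ 2 * μ ^ 2 - 2 * (ε + 2) * μ * ε + ε ^ 2) / ε ^ 2 := by
        field_simp
      rw [e1, div_lt_iff₀ (by positivity)]
      nlinarith [mul_pos hμ' hε', sq_nonneg (μ * ε), mul_pos (mul_pos hμ' hμ') hε']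
    rw [hVp]
    linarith
  · -- n = 3, m = 2
    have hm1 : m = 2 := by rw [hm, h]; ring
    subst hm1
    have key2 : μ * ε + 2 * μ < 2 * ε := by
      have e : μ * (ε + 2) = μ * ε + 2 * μ := by ring
      linarith [key]
    have hVs0 : Vs < 0 := by
      rw [hVs, h]
      apply div_neg_of_neg_of_pos (by linarith) (by linarith)
    refine ⟨?_, hVs0⟩
    have hB : 2 * Vs - aN = (6 * ε - μ * (3 * ε + 2)) / (6 * ε) := by
      rw [hVs, haN, h]; field_simp; ring
    have hB' : (0:ℝ) < (6 * ε - μ * (3 * ε + 2)) / (6 * ε) := by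
      apply div_pos _ (by linarith)
      nlinarith [key2]
    have hq : Real.sqrt QN < 2 * Vs - aN := by
      rw [hB, Real.sqrt_lt' hB', hQN]
      have e1 : ((ε - 2) / (2 * ε)) ^ 2 * μ ^ 2 - 2 * ((ε + 2) / (2 * ε)) * μ + 1
          = ((ε - 2) ^ 2 * μ ^ 2 - 2 * (ε + 2) * μ * (2 * ε) + 4 * ε ^ 2) / (4 * ε ^ 2) := by
        field_simp; ring
      rw [e1, div_pow, div_lt_div_iff₀ (by positivity) (by positivity)]
      have hfac : 0 < μ * (3 * ε * μ - 2 * μ + 3 * ε) := by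
        apply mul_pos hμ'
        have := mul_pos hμ' hε'
        linarith [key2]
      have e2 : (6 * ε - μ * (3 * ε + 2)) ^ 2 * (4 * ε ^ 2) -
          ((ε - 2) ^ 2 * μ ^ 2 - 2 * (ε + 2) * μ * (2 * ε) + 4 * ε ^ 2) * (6 * ε) ^ 2
          = 64 * ε ^ 2 * (μ * (3 * ε * μ - 2 * μ + 3 * ε)) := by ring
      have h3 : 0 < 64 * ε ^ 2 * (μ * (3 * ε * μ - 2 * μ + 3 * ε)) :=
        mul_pos (by positivity) hfac
      linarith
    rw [hVp]
    linarith
end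

section
/- Fix γ > 1 and n = 3, ε = γ-1. Consider β(μ) = 2μ/(ε(1+μ)), β₂(μ) = -V_+(μ)/(1+V_+(μ))², where V_+(μ) = (𝔞₃ + √𝔔₃)/2 with 𝔞₃ = ((ε-2)/(2ε))μ - 1 and 𝔔₃ = ((ε-2)/(2ε))²μ² - ((ε+2)/ε)μ + 1. Then for all sufficiently small μ > 0, β(μ) > β₂(μ). -/
/-!
`V₊` is the larger root of `V² - 𝔞₃ V + μ/ε = 0` (the discriminant of this quadratic is `𝔔₃`), so
`-V₊ = μ / (ε (V₊ - 𝔞₃))` and `β₂ = μ / (ε (V₊ - 𝔞₃) (1 + V₊)²)`. As `μ → 0` we have `V₊ → 0` and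
`𝔞₃ → -1`, so `β₂ ~ μ/ε` while `β ~ 2μ/ε`.
-/

open Filter Topology

noncomputable section

/-- `a₃`, `Q₃`, `vPlus` are the paper's `𝔞₃`, `𝔔₃`, `V₊`. -/
def a₃ (ε μ : ℝ) : ℝ := (ε - 2) / (2 * ε) * μ - 1

def Q₃ (ε μ : ℝ) : ℝ := ((ε - 2) / (2 * ε)) ^ 2 * μ ^ 2 - ((ε + 2) / ε) * μ + 1

def vPlus (ε μ : ℝ) : ℝ := (a₃ ε μ + √(Q₃ ε μ)) / 2

theorem add_sqrt_div_two_mul_sub {p q : ℝ} (h : 0 ≤ p ^ 2 - 4 * q) :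
    (p + √(p ^ 2 - 4 * q)) / 2 * ((p + √(p ^ 2 - 4 * q)) / 2 - p) = -q := by
  linear_combination Real.sq_sqrt h / 4

theorem Q₃_eq {ε : ℝ} (hε : ε ≠ 0) (μ : ℝ) : Q₃ ε μ = a₃ ε μ ^ 2 - 4 * (μ / ε) := by
  unfold Q₃ a₃
  field_simp
  ring

theorem vPlus_mul_sub_a₃ {ε μ : ℝ} (hε : ε ≠ 0) (hQ : 0 ≤ Q₃ ε μ) :
    vPlus ε μ * (vPlus ε μ - a₃ ε μ) = -(μ / ε) := by
  rw [Q₃_eq hε] at hQ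
  rw [vPlus, Q₃_eq hε]
  exact add_sqrt_div_two_mul_sub hQ

theorem continuous_a₃ (ε : ℝ) : Continuous (a₃ ε) := by
  unfold a₃; fun_prop

theorem continuous_Q₃ (ε : ℝ) : Continuous (Q₃ ε) := by
  unfold Q₃; fun_prop

theorem continuous_vPlus (ε : ℝ) : Continuous (vPlus ε) := by
  have := continuous_a₃ ε
  have := continuous_Q₃ ε
  unfold vPlus; fun_prop

@[simp] theorem a₃_zero (ε : ℝ) : a₃ ε 0 = -1 := by simp [a₃]

@[simp] theorem Q₃_zero (ε : ℝ) : Q₃ ε 0 = 1 := by simp [Q₃]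

@[simp] theorem vPlus_zero (ε : ℝ) : vPlus ε 0 = 0 := by simp [vPlus]

/-- `β > β₂` in terms of `V = V₊` and `w = V₊ - 𝔞₃`. -/
theorem neg_div_sq_lt {ε μ V w : ℝ} (hε : 0 < ε) (hμ : 0 < μ) (hw : 0 < w) (hV : 0 < 1 + V)
    (hVw : V * w = -(μ / ε)) (hlt : 1 + μ < 2 * w * (1 + V) ^ 2) :
    -V / (1 + V) ^ 2 < 2 * μ / (ε * (1 + μ)) := by
  rw [div_lt_div_iff₀ (by positivity) (by positivity)]
  refine lt_of_mul_lt_mul_right ?_ hw.le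
  have hVwε : -V * w * ε = μ := by field_simp at hVw; linarith
  calc -V * (ε * (1 + μ)) * w = μ * (1 + μ) := by rw [← hVwε]; ring
    _ < μ * (2 * w * (1 + V) ^ 2) := mul_lt_mul_of_pos_left hlt hμ
    _ = 2 * μ * (1 + V) ^ 2 * w := by ring

theorem eventually_vPlus (ε : ℝ) : ∀ᶠ μ in 𝓝 0,
    0 ≤ Q₃ ε μ ∧ 0 < vPlus ε μ - a₃ ε μ ∧ 0 < 1 + vPlus ε μ ∧
      1 + μ < 2 * (vPlus ε μ - a₃ ε μ) * (1 + vPlus ε μ) ^ 2 := by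
  have ha := continuous_a₃ ε
  have hQ := continuous_Q₃ ε
  have hV := continuous_vPlus ε
  have hw : Continuous fun μ => vPlus ε μ - a₃ ε μ := by fun_prop
  have hV1 : Continuous fun μ => 1 + vPlus ε μ := by fun_prop
  have hrhs : Continuous fun μ => 2 * (vPlus ε μ - a₃ ε μ) * (1 + vPlus ε μ) ^ 2 := by fun_prop
  refine ((hQ.tendsto 0).eventually_const_lt ?_).mono (fun _ h => h.le) |>.and <|
    ((hw.tendsto 0).eventually_const_lt ?_).and <| ((hV1.tendsto 0).eventually_const_lt ?_).and <|
    (continuous_const.add continuous_id).continuousAt.eventually_lt hrhs.continuousAt ?_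
  all_goals norm_num

end

theorem stmt_17 (γ : ℝ) (hγ : 1 < γ) (ε : ℝ) (hε : ε = γ - 1)
    (β β₂ Vp : ℝ → ℝ)
    (hβ : ∀ μ, β μ = 2 * μ / (ε * (1 + μ)))
    (hVp : ∀ μ, Vp μ = ((((ε - 2) / (2 * ε)) * μ - 1)
        + Real.sqrt (((ε - 2) / (2 * ε)) ^ 2 * μ ^ 2 - ((ε + 2) / ε) * μ + 1)) / 2)
    (hβ₂ : ∀ μ, β₂ μ = -(Vp μ) / (1 + Vp μ) ^ 2) :
    ∃ μ₀ > 0, ∀ μ, 0 < μ → μ < μ₀ → β μ > β₂ μ := by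
  have hε0 : 0 < ε := by linarith
  have hV : ∀ μ, Vp μ = vPlus ε μ := hVp
  obtain ⟨μ₀, hμ₀, hsmall⟩ := Metric.eventually_nhds_iff.1 (eventually_vPlus ε)
  refine ⟨μ₀, hμ₀, fun μ hμ hμμ₀ => ?_⟩
  obtain ⟨hQ, hw, hV1, hlt⟩ := hsmall (by rwa [Real.dist_0_eq_abs, abs_of_pos hμ])
  rw [hβ, hβ₂, hV]
  exact neg_div_sq_lt hε0 hμ hw hV1 (vPlus_mul_sub_a₃ hε0.ne' hQ) hlt
end

section
/- Fix γ > 1 and n = 2, ε = γ-1, m = 1. With β(μ) = 2μ/(ε(1+μ)) and β₂(μ) = -V_+(μ)/(1+V_+(μ))² as above (now with 𝔞₂ = ((ε-2)/ε)μ - 1, 𝔔₂ = ((ε-2)/ε)²μ² - (2(ε+2)/ε)μ + 1), the inequality β(μ) > β₂(μ) FAILS for all sufficiently small μ > 0. -/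
/-!
Put `c = 2μ/ε` and `s = 1 + c - μ`. Then `𝔞₂ = -s` and `𝔔₂ = s² - 4c`, so `V_+(μ) = -v` where
`v` is the smaller root of `v² - s v + c = 0`, and `β(μ) = c / (1 + μ)`, `β₂(μ) = v / (1 - v)²`.
The root relation `v (s - v) = c` reads `c (1 - v) = v (1 - μ - v)`, so `β ≤ β₂` reduces to
`(1 - μ - v)(1 - v) ≤ 1 + μ`, which holds as soon as `0 ≤ v < 1`. For small `μ` we have
`c ≤ 1/16` and `s ∈ [1/2, 2)`, so the discriminant is nonnegative and `0 ≤ v < 1`.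
-/

open Real

noncomputable def smallerRoot (s c : ℝ) : ℝ := (s - √(s ^ 2 - 4 * c)) / 2

lemma smallerRoot_mul_sub_self {s c : ℝ} (h : 4 * c ≤ s ^ 2) :
    smallerRoot s c * (s - smallerRoot s c) = c := by
  have hsq : √(s ^ 2 - 4 * c) ^ 2 = s ^ 2 - 4 * c := sq_sqrt (by linarith)
  unfold smallerRoot
  linear_combination -hsq / 4

lemma smallerRoot_nonneg {s c : ℝ} (hs : 0 ≤ s) (hc : 0 ≤ c) : 0 ≤ smallerRoot s c := by
  have : √(s ^ 2 - 4 * c) ≤ s := sqrt_le_iff.mpr ⟨hs, by linarith⟩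
  unfold smallerRoot
  linarith

lemma smallerRoot_lt_one {s : ℝ} (hs : s < 2) (c : ℝ) : smallerRoot s c < 1 := by
  have := sqrt_nonneg (s ^ 2 - 4 * c)
  unfold smallerRoot
  linarith

lemma div_one_add_le_div_one_sub_sq {c μ v : ℝ} (hμ : 0 ≤ μ) (hv0 : 0 ≤ v) (hv1 : v < 1)
    (hroot : v * (1 + c - μ - v) = c) : c / (1 + μ) ≤ v / (1 - v) ^ 2 := by
  have hcv : c * (1 - v) = v * (1 - μ - v) := by linear_combination -hroot
  rw [div_le_div_iff₀ (by linarith) (by nlinarith)]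
  calc c * (1 - v) ^ 2 = v * ((1 - μ - v) * (1 - v)) := by linear_combination (1 - v) * hcv
    _ ≤ v * (1 + μ) := by gcongr; nlinarith

theorem stmt_18 (γ : ℝ) (hγ : 1 < γ) (ε : ℝ) (hε : ε = γ - 1)
    (β β₂ Vp : ℝ → ℝ)
    (hβ : ∀ μ, β μ = 2 * μ / (ε * (1 + μ)))
    (hVp : ∀ μ, Vp μ = ((((ε - 2) / ε) * μ - 1)
        + Real.sqrt (((ε - 2) / ε) ^ 2 * μ ^ 2 - (2 * (ε + 2) / ε) * μ + 1)) / 2)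
    (hβ₂ : ∀ μ, β₂ μ = -(Vp μ) / (1 + Vp μ) ^ 2) :
    ∃ μ₀ > 0, ∀ μ, 0 < μ → μ < μ₀ → ¬ (β μ > β₂ μ) := by
  have hε0 : 0 < ε := by linarith
  refine ⟨min (1 / 2) (ε / 32), by positivity, fun μ hμ hμ₀ => ?_⟩
  have hμ_half : μ < 1 / 2 := hμ₀.trans_le (min_le_left _ _)
  set c := 2 * μ / ε with hc_def
  have hc0 : 0 ≤ c := by positivity
  have hc_small : c < 1 / 16 := by
    rw [hc_def, div_lt_iff₀ hε0]
    linarith [hμ₀.trans_le (min_le_right _ _)]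
  have hVp_eq : Vp μ = -smallerRoot (1 + c - μ) c := by
    rw [hVp, smallerRoot, hc_def]
    field_simp
    ring_nf
  rw [gt_iff_lt, not_lt, hβ, hβ₂, hVp_eq, neg_neg, ← sub_eq_add_neg, ← div_div]
  refine div_one_add_le_div_one_sub_sq hμ.le (smallerRoot_nonneg (by linarith) hc0)
    (smallerRoot_lt_one (by linarith) c) (smallerRoot_mul_sub_self (by nlinarith))
end
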